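/- Let $n_1 > n_2 \geq 3$ and let $\mathcal{H}_{n_1,n_2}$ be the 3-uniform bi-hypergraph on $X = [n_1] \times [n_2]$ whose edges are the 3-subsets taking exactly 2 distinct values in both coordinates. Suppose $c$ is a proper coloring of $\mathcal{H}_{n_1,n_2}$ in which $(1,1)$ and $(1,2)$ receive distinct colors. Then $c$ equals the partition by second coordinate: two vertices receive the same color if and only if they have the same second coordinate. -/

import Mathlib

/-- Edge set of the 3-uniform bi-hypergraph `H_{n₁,n₂}` on `[n₁] × [n₂]`. -/
def E2 (n1 n2 : ℕ) : Set (Finset (Fin n1 × Fin n2)) :=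
  {b | b.card = 3 ∧ (b.image Prod.fst).card = 2 ∧ (b.image Prod.snd).card = 2}

/-- A proper coloring of a bi-hypergraph. -/
def ProperColoring {X α : Type*} (E : Set (Finset X)) (c : X → α) : Prop :=
  ∀ b ∈ E, (∃ x ∈ b, ∃ y ∈ b, x ≠ y ∧ c x = c y) ∧ (∃ x ∈ b, ∃ y ∈ b, c x ≠ c y)

/-!
Each "corner" `{(a,x), (a,y), (b,x)}` with `a ≠ b`, `x ≠ y` is an edge of `H_{n₁,n₂}`, so a
proper coloring makes exactly two of its three colors equal. An equality `c (a,x) = c (a,y)` in one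
row therefore forces the same equality in every row, and then column `x` is rainbow. Starting from
a row with two distinct colors `c (a,x) ≠ c (a,z)`, the corners force `c (p,z) = c (q,x)` for all
`p ≠ q`, which contradicts column `x` being rainbow as soon as there are three rows. So every row
is rainbow. Then if `c (a,x) ≠ c (b,x)`, each corner at `(a,x)` gives `c (a,w) = c (b,x)` for all
`w ≠ x`; with two such `w` this contradicts row `a` being rainbow, so columns are monochromatic.
-/

theorem ProperColoring.triple {X α : Type*} [DecidableEq X] {E : Set (Finset X)} {c : X → α}
    (hc : ProperColoring E c) {p q r : X} (hE : {p, q, r} ∈ E) :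
    (c p = c q ∨ c p = c r ∨ c q = c r) ∧ ¬(c p = c q ∧ c p = c r) := by
  obtain ⟨⟨u, hu, v, hv, huv, hcuv⟩, ⟨u', hu', v', hv', hcuv'⟩⟩ := hc _ hE
  simp only [Finset.mem_insert, Finset.mem_singleton] at hu hv hu' hv'
  constructor
  · by_contra! h
    rcases hu with rfl | rfl | rfl <;> rcases hv with rfl | rfl | rfl <;> simp_all [eq_comm]
  · rintro ⟨h₁, h₂⟩
    rcases hu' with rfl | rfl | rfl <;> rcases hv' with rfl | rfl | rfl <;> simp_all

theorem corner_mem_E2 {n1 n2 : ℕ} {a b : Fin n1} {x y : Fin n2} (hab : a ≠ b) (hxy : x ≠ y) :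
    {(a, x), (a, y), (b, x)} ∈ E2 n1 n2 := by
  refine ⟨?_, ?_, ?_⟩
  · rw [Finset.card_insert_of_notMem (by simp [hxy, hab]),
      Finset.card_insert_of_notMem (by simp [hab]), Finset.card_singleton]
  · simp only [Finset.image_insert, Finset.image_singleton]
    rw [Finset.card_insert_of_mem (by simp), Finset.card_pair hab]
  · simp only [Finset.image_insert, Finset.image_singleton]
    rw [Finset.card_insert_of_mem (by simp), Finset.card_pair hxy.symm]

section Corner

variable {R C α : Type*} {c : R × C → α}

def IsCornerColoring (c : R × C → α) : Prop :=
  ∀ ⦃a b : R⦄ ⦃x y : C⦄, a ≠ b → x ≠ y →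
    (c (a, x) = c (a, y) ∨ c (a, x) = c (b, x) ∨ c (a, y) = c (b, x)) ∧
      ¬(c (a, x) = c (a, y) ∧ c (a, x) = c (b, x))

theorem ProperColoring.isCornerColoring {n1 n2 : ℕ} {c : Fin n1 × Fin n2 → α}
    (hc : ProperColoring (E2 n1 n2) c) : IsCornerColoring c := fun _ _ _ _ hab hxy =>
  hc.triple (corner_mem_E2 hab hxy)

namespace IsCornerColoring

theorem eq_of_eq_in_row (hc : IsCornerColoring c) {a b : R} {x y : C} (hxy : x ≠ y)
    (h : c (a, x) = c (a, y)) : c (b, x) = c (b, y) := by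
  obtain rfl | hab := eq_or_ne a b
  · exact h
  have hbx : c (b, x) ≠ c (a, x) := fun h' => (hc hab hxy).2 ⟨h, h'.symm⟩
  have hby : c (b, y) ≠ c (a, x) := fun h' =>
    (hc hab hxy.symm).2 ⟨h.symm, h.symm.trans h'.symm⟩
  rcases (hc hab.symm hxy).1 with h' | h' | h'
  · exact h'
  · exact absurd h' hbx
  · exact absurd h' hby

theorem ne_in_col_of_eq_in_row (hc : IsCornerColoring c) {a p q : R} {x y : C}
    (hxy : x ≠ y) (h : c (a, x) = c (a, y)) (hpq : p ≠ q) : c (p, x) ≠ c (q, x) := fun h' =>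
  (hc hpq hxy).2 ⟨hc.eq_of_eq_in_row hxy h, h'⟩

theorem ne_in_row (hc : IsCornerColoring c) {a₀ : R} {x₀ y₀ : C}
    (h₀ : c (a₀, x₀) ≠ c (a₀, y₀)) {p q r : R} (hpq : p ≠ q) (hpr : p ≠ r) (hqr : q ≠ r)
    (a : R) {x y : C} (hxy : x ≠ y) : c (a, x) ≠ c (a, y) := by
  intro h
  obtain ⟨z, hz⟩ : ∃ z, c (a₀, x) ≠ c (a₀, z) := by
    by_cases hx : c (a₀, x) = c (a₀, x₀)
    · exact ⟨y₀, hx ▸ h₀⟩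
    · exact ⟨x₀, hx⟩
  have hxz : x ≠ z := by rintro rfl; exact hz rfl
  have hcol_xz : ∀ b, c (b, x) ≠ c (b, z) := fun b h' => hz (hc.eq_of_eq_in_row hxz h')
  have key : ∀ b b', b ≠ b' → c (b, z) = c (b', x) := by
    intro b b' hbb'
    rcases (hc hbb' hxz).1 with h' | h' | h'
    · exact absurd h' (hcol_xz b)
    · exact absurd h' (hc.ne_in_col_of_eq_in_row hxy h hbb')
    · exact h'
  exact hc.ne_in_col_of_eq_in_row hxy h hqr ((key p q hpq).symm.trans (key p r hpr))

theorem eq_in_col (hc : IsCornerColoring c) (hrow : ∀ a x y, x ≠ y → c (a, x) ≠ c (a, y))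
    {x y y' : C} (hyy' : y ≠ y') (hy : y ≠ x) (hy' : y' ≠ x) (a b : R) :
    c (a, x) = c (b, x) := by
  obtain rfl | hab := eq_or_ne a b
  · rfl
  by_contra hne
  have hw : ∀ w, w ≠ x → c (a, w) = c (b, x) := by
    intro w hw
    rcases (hc hab hw.symm).1 with h | h | h
    · exact absurd h (hrow a x w hw.symm)
    · exact absurd h hne
    · exact h
  exact hrow a y y' hyy' ((hw y hy).trans (hw y' hy').symm)

end IsCornerColoring

end Corner

theorem Fintype.exists_pair_ne_of_two_lt_card {C : Type*} [Fintype C] [DecidableEq C]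
    (h : 2 < Fintype.card C) (x : C) : ∃ y y' : C, y ≠ y' ∧ y ≠ x ∧ y' ≠ x := by
  have : 1 < (Finset.univ.erase x).card := by
    rw [Finset.card_erase_of_mem (Finset.mem_univ x), Finset.card_univ]; omega
  obtain ⟨y, hy, y', hy', hyy'⟩ := Finset.one_lt_card.1 this
  exact ⟨y, y', hyy', Finset.ne_of_mem_erase hy, Finset.ne_of_mem_erase hy'⟩

/-- if a proper coloring of `H_{n₁,n₂}` (with `n₁ > n₂ ≥ 3`)
gives `(1,1)` and `(1,2)` distinct colors, then it is the partition by the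
second coordinate. -/
theorem stmt17 (n1 n2 : ℕ) (h12 : n2 < n1) (h2 : 3 ≤ n2) {α : Type*}
    (c : Fin n1 × Fin n2 → α) (hc : ProperColoring (E2 n1 n2) c)
    (hdiff : c (⟨0, by omega⟩, ⟨0, by omega⟩) ≠ c (⟨0, by omega⟩, ⟨1, by omega⟩)) :
    ∀ x y : Fin n1 × Fin n2, c x = c y ↔ x.2 = y.2 := by
  have hc := hc.isCornerColoring
  obtain ⟨p, q, r, hpq, hpr, hqr⟩ :=
    Fintype.two_lt_card_iff.1 (by rw [Fintype.card_fin]; omega : 2 < Fintype.card (Fin n1))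
  have hrow : ∀ a x y, x ≠ y → c (a, x) ≠ c (a, y) := fun a x y =>
    hc.ne_in_row hdiff hpq hpr hqr a
  have hcol : ∀ x a b, c (a, x) = c (b, x) := fun x => by
    obtain ⟨y, y', hyy', hy, hy'⟩ := Fintype.exists_pair_ne_of_two_lt_card
      (by rw [Fintype.card_fin]; omega) x
    exact hc.eq_in_col hrow hyy' hy hy'
  rintro ⟨a, x⟩ ⟨b, y⟩
  constructor
  · intro h
    by_contra hxy
    exact hrow a x y hxy (h.trans (hcol y b a))
  · rintro (rfl : x = y)
    exact hcol x a b
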